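/- For each n ≥ 4, the number of connected spanning subgraphs of the level-n Schreier graph B_n of the Basilica group is: for n odd, 2^{2^{n−1}} (1 + 2^{(n−1)/2})^4 (1 + 2^{(n+1)/2}) · Π_{i=1}^{(n−1)/2 − 1} (1 + 2^i)^{3·2^{n−2i−1}}; for n even, 2^{2^{n−1}} (1 + 2^{n/2})^3 · Π_{i=1}^{n/2 − 1} (1 + 2^i)^{3·2^{n−2i−1}}. Moreover, the counts for n = 1, 2, 3 are 2^2·3, 2^2·3^3, and 2^4·3^4·5, respectively. -/

import Mathlib

/-- A finite multigraph on a vertex set `V`: a finite edge type together with an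
incidence map assigning to each edge its unordered pair of endpoints
(loops and parallel edges are allowed). -/
structure Multigraph (V : Type) where
  /-- the type of edges -/
  Edge : Type
  /-- the edge type is finite -/
  fintypeEdge : Fintype Edge
  /-- equality of edges is decidable -/
  decEqEdge : DecidableEq Edge
  /-- the unordered pair of endpoints of an edge -/
  inc : Edge → Sym2 V

attribute [instance] Multigraph.fintypeEdge Multigraph.decEqEdge

namespace Multigraph

variable {V : Type} [Fintype V] [DecidableEq V]

/-- The simple graph underlying the spanning subgraph of `G` with edge set `A`:
two distinct vertices are adjacent iff some edge in `A` has them as endpoints. -/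
def toSimple (G : Multigraph V) (A : Finset G.Edge) : SimpleGraph V :=
  SimpleGraph.fromRel fun u v => ∃ e ∈ A, G.inc e = s(u, v)

/-- `G.comps A` is the number `k(A)` of connected components of the spanning
subgraph of `G` with edge set `A`. -/
noncomputable def comps (G : Multigraph V) (A : Finset G.Edge) : ℕ :=
  Nat.card (G.toSimple A).ConnectedComponent

/-- The rank `r(A) = |V| - k(A)` of the spanning subgraph with edge set `A`. -/
noncomputable def rk (G : Multigraph V) (A : Finset G.Edge) : ℕ :=
  Fintype.card V - G.comps A

/-- The nullity `n(A) = |E(A)| - r(A)` of the spanning subgraph with edge set `A`. -/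
noncomputable def nullity (G : Multigraph V) (A : Finset G.Edge) : ℕ :=
  A.card - G.rk A

/-- The Tutte polynomial
`T(G; x, y) = ∑_{A ⊆ E} (x - 1) ^ (r(E) - r(A)) * (y - 1) ^ n(A)`,
as a function of two real variables. -/
noncomputable def tutte (G : Multigraph V) (x y : ℝ) : ℝ :=
  ∑ A ∈ (Finset.univ : Finset G.Edge).powerset,
    (x - 1) ^ (G.rk Finset.univ - G.rk A) * (y - 1) ^ (G.nullity A)

/-- The reliability polynomial `R(G, p)`: the probability that, when each edge is
independently active with probability `p`, every pair of vertices is joined by a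
path of active edges (i.e. the spanning subgraph of active edges is connected). -/
noncomputable def reliability (G : Multigraph V) (p : ℝ) : ℝ :=
  ∑ A ∈ (Finset.univ : Finset G.Edge).powerset,
    if G.comps A = 1 then p ^ A.card * (1 - p) ^ (Fintype.card G.Edge - A.card) else 0

/-- The complexity `τ(G)`: the number of spanning subtrees of `G`, i.e. spanning
subgraphs which are connected and have `|V| - 1` edges. -/
noncomputable def treeCount (G : Multigraph V) : ℕ :=
  Nat.card {A : Finset G.Edge // G.comps A = 1 ∧ A.card + 1 = Fintype.card V}

/-- The number of connected spanning subgraphs of `G`. -/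
noncomputable def connCount (G : Multigraph V) : ℕ :=
  Nat.card {A : Finset G.Edge // G.comps A = 1}

/-- The number of spanning forests of `G`: spanning subgraphs containing no cycle,
i.e. with `|E(A)| = |V| - k(A)` (zero nullity). -/
noncomputable def forestCount (G : Multigraph V) : ℕ :=
  Nat.card {A : Finset G.Edge // A.card + G.comps A = Fintype.card V}

/-- `σ` is an orientation of `G` if it assigns to every edge an ordered pair of
vertices whose underlying unordered pair is the pair of endpoints of the edge. -/
def IsOrientation (G : Multigraph V) (σ : G.Edge → V × V) : Prop :=
  ∀ e, s((σ e).1, (σ e).2) = G.inc e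

/-- The number of acyclic orientations of `G`: orientations admitting no directed
cycle. -/
noncomputable def acyclicOrientationCount (G : Multigraph V) : ℕ :=
  Nat.card {σ : G.Edge → V × V //
    G.IsOrientation σ ∧ ∀ v : V, ¬ Relation.TransGen (fun u w => ∃ e, σ e = (u, w)) v v}

/-- A proper coloring of `G`: the two endpoints of every edge receive distinct
colors. -/
def ProperColoring (G : Multigraph V) {α : Type} (c : V → α) : Prop :=
  ∀ e, ¬ (Sym2.map c (G.inc e)).IsDiag

/-- The number of proper colorings of `G` with `k` colors (the value `χ(G, k)` of
the chromatic polynomial at the natural number `k`). -/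
noncomputable def chromCount (G : Multigraph V) (k : ℕ) : ℕ :=
  Nat.card {c : V → Fin k // G.ProperColoring c}

end Multigraph

mutual
  /-- The generator `a = e(b, id)` of the Basilica group, acting on the `n`-th
  level of the binary rooted tree: `a(1w) = 1w` and `a(0w) = 0 b(w)`. -/
  def basA : (n : ℕ) → (Fin n → Bool) → (Fin n → Bool)
    | 0, v => v
    | n + 1, v =>
      match v 0 with
      | true => v
      | false => Fin.cons false (basB n (Fin.tail v))

  /-- The generator `b = ε(a, id)` of the Basilica group, acting on the `n`-th
  level of the binary rooted tree: `b(1w) = 0w` and `b(0w) = 1 a(w)`. -/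
  def basB : (n : ℕ) → (Fin n → Bool) → (Fin n → Bool)
    | 0, v => v
    | n + 1, v =>
      match v 0 with
      | true => Fin.cons false (Fin.tail v)
      | false => Fin.cons true (basA n (Fin.tail v))
end

/-- The generator of the Basilica group indexed by a boolean tag. -/
def basGen (n : ℕ) : Bool → (Fin n → Bool) → (Fin n → Bool)
  | true => basA n
  | false => basB n

/-- The level-`n` Schreier graph `B_n` of the Basilica group: vertices are the
binary words of length `n`, and for each generator `s ∈ {a, b}` and each vertex
`v` there is one edge joining `v` and `s(v)` (a loop when `s(v) = v`). -/
def basilica (n : ℕ) : Multigraph (Fin n → Bool) where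
  Edge := Bool × (Fin n → Bool)
  fintypeEdge := inferInstance
  decEqEdge := inferInstance
  inc := fun e => s(e.2, basGen n e.1 e.2)

/-!
`B_n` is a cactus, so a spanning subgraph is connected iff it omits at most one edge of every
cycle, and a cycle of length `ℓ` contributes the factor `ℓ + 1` (a loop the factor `2`).
`B_(n+1)` is a copy `0B_n` of `B_n` whose `b`-edges have become `a`-edges and whose `a`-edges
`t — a(t)` are each subdivided by the vertex `1a(t)`, together with a loop at every `1w`.
Contracting the subdivisions carries both connectivity and the cycle condition from level `n + 1`
down to level `n`. The same picture gives the cycles of `B_(n+1)`: the `b`-cycles of `B_n` as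
`a`-cycles of the same length, the `a`-cycles of `B_n` as `b`-cycles of twice the length, and the
new loops; unwinding this recursion yields the product formula.
-/

open Finset Function SimpleGraph

theorem Nat.card_finset_injOn_eq_prod {E J : Type*} [Fintype E] [DecidableEq E] [Fintype J]
    (q : E → J) :
    Nat.card {B : Finset E // Set.InjOn q B} = ∏ j, (Nat.card {e // q e = j} + 1) := by
  classical
  -- `B` is determined by the element it picks, if any, from each fibre of `q`.
  let ofChoice (F : ∀ j, Option {e // q e = j}) : Finset E :=
    univ.filter fun e => F (q e) = some ⟨e, rfl⟩
  have mem_ofChoice (F : ∀ j, Option {e // q e = j}) {e : E} {j : J} (h : q e = j) :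
      e ∈ ofChoice F ↔ F j = some ⟨e, h⟩ := by
    subst h; simp [ofChoice]
  have injOn_ofChoice (F : ∀ j, Option {e // q e = j}) : Set.InjOn q (ofChoice F) := by
    intro e he f hf hef
    rw [Finset.mem_coe, mem_ofChoice F rfl] at he
    rw [Finset.mem_coe, mem_ofChoice F hef.symm, he] at hf
    exact congrArg Subtype.val (Option.some_injective _ hf)
  have bij : Bijective fun F =>
      (⟨ofChoice F, injOn_ofChoice F⟩ : {B : Finset E // Set.InjOn q B}) := by
    refine ⟨fun F G hFG => funext fun j => Option.ext fun x => ?_, fun ⟨B, hB⟩ => ?_⟩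
    · rw [← mem_ofChoice F x.2, ← mem_ofChoice G x.2, Subtype.mk.inj hFG]
    · let F (j : J) : Option {e // q e = j} :=
        if h : ∃ e ∈ B, q e = j then some ⟨h.choose, h.choose_spec.2⟩ else none
      refine ⟨F, Subtype.ext (Finset.ext fun e => (mem_ofChoice F rfl).trans ?_)⟩
      constructor
      · intro h
        dsimp only [F] at h
        split_ifs at h with hex
        exact Subtype.mk.inj (Option.some_injective _ h) ▸ hex.choose_spec.1
      · intro he
        have hex : ∃ f ∈ B, q f = q e := ⟨e, he, rfl⟩
        dsimp only [F]
        rw [dif_pos hex]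
        exact congrArg some (Subtype.ext (hB hex.choose_spec.1 he hex.choose_spec.2))
  rw [← Nat.card_congr (Equiv.ofBijective _ bij), Nat.card_pi]
  simp [Nat.card_eq_fintype_card]

theorem Nat.card_finset_injOn_compl_eq_prod {E J : Type*} [Fintype E] [DecidableEq E] [Fintype J]
    (q : E → J) :
    Nat.card {A : Finset E // Set.InjOn q (↑A)ᶜ} = ∏ j, (Nat.card {e // q e = j} + 1) := by
  rw [← Nat.card_finset_injOn_eq_prod]
  exact Nat.card_congr ((Involutive.toPerm _ compl_involutive).subtypeEquiv fun A => by simp)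

theorem Finset.prod_Icc_one_succ {M : Type*} [CommMonoid M] (f : ℕ → M) (m : ℕ) :
    ∏ i ∈ Icc 1 (m + 1), f i = f 1 * ∏ i ∈ Icc 1 m, f (i + 1) := by
  induction m with
  | zero => simp
  | succ m ih => rw [prod_Icc_succ_top (by omega), ih, prod_Icc_succ_top (by omega), mul_assoc]

theorem Nat.card_subtype_bool_prod {α : Type*} [Finite α] (Q : Bool × α → Prop) :
    Nat.card {e // Q e} = Nat.card {a // Q (false, a)} + Nat.card {a // Q (true, a)} := by
  let e := Equiv.boolProdEquivSum α
  rw [← Nat.card_sum]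
  exact Nat.card_congr
    ((e.subtypeEquiv (q := Q ∘ e.symm) fun p => by simp).trans Equiv.subtypeSum)

theorem Nat.card_subtype_fin_succ_bool {n : ℕ} (P : (Fin (n + 1) → Bool) → Prop) :
    Nat.card {v // P v} =
      Nat.card {w // P (Fin.cons false w)} + Nat.card {w // P (Fin.cons true w)} := by
  rw [← Nat.card_subtype_bool_prod fun p => P (Fin.cons p.1 p.2)]
  exact Nat.card_congr ((Fin.consEquiv fun _ => Bool).symm.subtypeEquiv fun v => by simp)

namespace Multigraph

variable {V : Type} (G : Multigraph V)

theorem comps_eq_one_iff (A : Finset G.Edge) : G.comps A = 1 ↔ (G.toSimple A).Connected := by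
  rw [comps, Nat.card_eq_one_iff_unique, connected_iff]
  refine and_congr ⟨fun _ u v => ConnectedComponent.exact (Subsingleton.elim _ _),
      Preconnected.subsingleton_connectedComponent⟩
    ⟨fun ⟨c⟩ => ?_, fun ⟨v⟩ => ⟨.mk _ v⟩⟩
  obtain ⟨v, -⟩ := c.exists_rep
  exact ⟨v⟩

theorem toSimple_adj (A : Finset G.Edge) (u v : V) :
    (G.toSimple A).Adj u v ↔ u ≠ v ∧ ∃ e ∈ A, G.inc e = s(u, v) := by
  rw [toSimple, fromRel_adj]
  refine and_congr_right fun _ => or_iff_left_of_imp fun ⟨e, he, h⟩ => ⟨e, he, ?_⟩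
  rw [h, Sym2.eq_swap]

theorem reachable_of_mem {A : Finset G.Edge} {e : G.Edge} (he : e ∈ A) {u v : V}
    (h : G.inc e = s(u, v)) : (G.toSimple A).Reachable u v := by
  by_cases huv : u = v
  · exact huv ▸ Reachable.refl u
  · exact Adj.reachable ((G.toSimple_adj A u v).2 ⟨huv, e, he, h⟩)

theorem reachable_map {W : Type} {H : Multigraph W}
    {A : Finset G.Edge} {B : Finset H.Edge} (f : V → W)
    (hf : ∀ e ∈ A, ∀ u v, G.inc e = s(u, v) → (H.toSimple B).Reachable (f u) (f v))
    {u v : V} (h : (G.toSimple A).Reachable u v) : (H.toSimple B).Reachable (f u) (f v) := by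
  rw [reachable_iff_reflTransGen] at h ⊢
  refine h.lift' f fun x y hxy => ?_
  obtain ⟨-, e, he, hinc⟩ := (G.toSimple_adj A x y).1 hxy
  exact (reachable_iff_reflTransGen _ _).1 (hf e he x y hinc)

end Multigraph

section Generators

variable {n : ℕ} (w : Fin n → Bool)

@[simp] theorem basA_cons_true : basA (n + 1) (Fin.cons true w) = Fin.cons true w := by
  simp [basA]

@[simp] theorem basA_cons_false :
    basA (n + 1) (Fin.cons false w) = Fin.cons false (basB n w) := by
  simp [basA]

@[simp] theorem basB_cons_true : basB (n + 1) (Fin.cons true w) = Fin.cons false w := by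
  simp [basB]

@[simp] theorem basB_cons_false :
    basB (n + 1) (Fin.cons false w) = Fin.cons true (basA n w) := by
  simp [basB]

end Generators

mutual
theorem basA_injective : ∀ n, Injective (basA n)
  | 0 => fun _ _ h => h
  | n + 1 => by
    intro v v' h
    induction v using Fin.consCases with | cons x w => ?_
    induction v' using Fin.consCases with | cons x' w' => ?_
    cases x <;> cases x' <;> simp [Fin.cons_inj, (basB_injective n).eq_iff] at h ⊢ <;> exact h

theorem basB_injective : ∀ n, Injective (basB n)
  | 0 => fun _ _ h => h
  | n + 1 => by
    intro v v' h
    induction v using Fin.consCases with | cons x w => ?_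
    induction v' using Fin.consCases with | cons x' w' => ?_
    cases x <;> cases x' <;> simp [Fin.cons_inj, (basA_injective n).eq_iff] at h ⊢ <;> exact h
end

noncomputable def basAPerm (n : ℕ) : Equiv.Perm (Fin n → Bool) :=
  Equiv.ofBijective (basA n) (basA_injective n).bijective_of_finite

@[simp] theorem basAPerm_apply (n : ℕ) (t : Fin n → Bool) : basAPerm n t = basA n t := rfl

@[simp] theorem basAPerm_symm_basA (n : ℕ) (t : Fin n → Bool) :
    (basAPerm n).symm (basA n t) = t :=
  (basAPerm n).symm_apply_apply t

theorem basilica_inc (n : ℕ) (e : Bool × (Fin n → Bool)) :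
    (basilica n).inc e = s(e.2, basGen n e.1 e.2) := rfl

mutual
def CycleA : ℕ → Type
  | 0 => Unit
  | n + 1 => (Fin n → Bool) ⊕ CycleB n

def CycleB : ℕ → Type
  | 0 => Unit
  | n + 1 => CycleA n
end

-- Lets the `Sum` API see through `CycleA (n + 1)` and `CycleB (n + 1)`.
attribute [reducible] CycleA CycleB

def cycleFintype : (n : ℕ) → Fintype (CycleA n) × Fintype (CycleB n)
  | 0 => (inferInstanceAs (Fintype Unit), inferInstanceAs (Fintype Unit))
  | n + 1 => (letI := (cycleFintype n).2; inferInstanceAs (Fintype ((Fin n → Bool) ⊕ CycleB n)),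
      (cycleFintype n).1)

instance (n : ℕ) : Fintype (CycleA n) := (cycleFintype n).1

instance (n : ℕ) : Fintype (CycleB n) := (cycleFintype n).2

mutual
/-- `cycleA n v` and `cycleB n v` are the cycles of `B_n` through the `a`- and the `b`-edge at
`v`, a loop being a cycle of length one. In `B_(n+1)` the `a`-edge at `1w` is a loop, the `a`-edge
at `0w` lies on the cycle of the `b`-edge at `w` in `B_n`, and both `b`-edges at `xw` lie on the
cycle of the `a`-edge at `w` in `B_n`. -/
def cycleA : (n : ℕ) → (Fin n → Bool) → CycleA n
  | 0, _ => ()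
  | n + 1, v =>
    match v 0 with
    | true => Sum.inl (Fin.tail v)
    | false => Sum.inr (cycleB n (Fin.tail v))

def cycleB : (n : ℕ) → (Fin n → Bool) → CycleB n
  | 0, _ => ()
  | n + 1, v => cycleA n (Fin.tail v)
end

section Cycles

variable {n : ℕ}

@[simp] theorem cycleA_cons_true (w : Fin n → Bool) :
    cycleA (n + 1) (Fin.cons true w) = Sum.inl w :=
  rfl

@[simp] theorem cycleA_cons_false (w : Fin n → Bool) :
    cycleA (n + 1) (Fin.cons false w) = Sum.inr (cycleB n w) :=
  rfl

@[simp] theorem cycleB_cons (x : Bool) (w : Fin n → Bool) :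
    cycleB (n + 1) (Fin.cons x w) = cycleA n w :=
  rfl

end Cycles

mutual
@[simp] theorem cycleA_basA : ∀ n (v : Fin n → Bool), cycleA n (basA n v) = cycleA n v
  | 0, _ => rfl
  | n + 1, v => by
    induction v using Fin.consCases with | cons x w => ?_
    cases x <;> simp [cycleB_basB n w]

@[simp] theorem cycleB_basB : ∀ n (v : Fin n → Bool), cycleB n (basB n v) = cycleB n v
  | 0, _ => rfl
  | n + 1, v => by
    induction v using Fin.consCases with | cons x w => ?_
    cases x <;> simp [cycleA_basA n w]
end

@[simp] theorem cycleA_basAPerm_symm (n : ℕ) (w : Fin n → Bool) :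
    cycleA n ((basAPerm n).symm w) = cycleA n w := by
  rw [← cycleA_basA, ← basAPerm_apply, Equiv.apply_symm_apply]

def edgeCycle (n : ℕ) : Bool × (Fin n → Bool) → CycleA n ⊕ CycleB n
  | (true, v) => Sum.inl (cycleA n v)
  | (false, v) => Sum.inr (cycleB n v)

theorem edgeCycle_zero_injective : Injective (edgeCycle 0) := by
  rintro ⟨_ | _, v⟩ ⟨_ | _, v'⟩ h <;> simp_all [edgeCycle, Subsingleton.elim v v']

namespace Basilica

variable {n : ℕ}

/-- Edges of `B_(n+1)` other than the loops at the vertices `1w` come from edges of `B_n`: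
the `a`-edge `0w — 0b(w)` from the `b`-edge at `w`, and the two `b`-edges `0t — 1a(t)` and
`1a(t) — 0a(t)` from the `a`-edge at `t`, which they subdivide. -/
noncomputable def lowerEdge : Bool × (Fin (n + 1) → Bool) → Bool × (Fin n → Bool)
  | (true, v) => (false, Fin.tail v)
  | (false, v) => (true, bif v 0 then (basAPerm n).symm (Fin.tail v) else Fin.tail v)

def IsLoopAtOne (e : Bool × (Fin (n + 1) → Bool)) : Prop := e.1 = true ∧ e.2 0 = true

instance : DecidablePred (IsLoopAtOne (n := n)) := fun _ => instDecidableAnd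

@[simp] theorem lowerEdge_a (x : Bool) (w : Fin n → Bool) :
    lowerEdge (true, Fin.cons x w) = (false, w) := rfl

@[simp] theorem lowerEdge_b_cons_false (t : Fin n → Bool) :
    lowerEdge (false, Fin.cons false t) = (true, t) := rfl

@[simp] theorem lowerEdge_b_cons_true (w : Fin n → Bool) :
    lowerEdge (false, Fin.cons true w) = (true, (basAPerm n).symm w) := rfl

theorem lowerEdge_eq_b_iff {e : Bool × (Fin (n + 1) → Bool)} {w : Fin n → Bool} :
    lowerEdge e = (false, w) ∧ ¬IsLoopAtOne e ↔ e = (true, Fin.cons false w) := by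
  obtain ⟨_ | _, v⟩ := e <;> induction v using Fin.consCases with | cons x v => ?_ <;>
    cases x <;> simp [IsLoopAtOne, Fin.cons_inj]

theorem lowerEdge_eq_a_iff {e : Bool × (Fin (n + 1) → Bool)} {t : Fin n → Bool} :
    lowerEdge e = (true, t) ↔
      e = (false, Fin.cons false t) ∨ e = (false, Fin.cons true (basA n t)) := by
  obtain ⟨_ | _, v⟩ := e <;> induction v using Fin.consCases with | cons x v => ?_ <;>
    cases x <;> simp [Fin.cons_inj, Equiv.symm_apply_eq]

def liftCycle : CycleA n ⊕ CycleB n → CycleA (n + 1) ⊕ CycleB (n + 1) :=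
  Sum.elim Sum.inr fun j => Sum.inl (Sum.inr j)

theorem liftCycle_injective : Injective (liftCycle (n := n)) := by
  rintro (_ | _) (_ | _) h <;> simp_all [liftCycle]

theorem edgeCycle_succ_of_not_isLoopAtOne {e : Bool × (Fin (n + 1) → Bool)}
    (he : ¬IsLoopAtOne e) :
    edgeCycle (n + 1) e = liftCycle (edgeCycle n (lowerEdge e)) := by
  obtain ⟨_ | _, v⟩ := e <;> induction v using Fin.consCases with | cons x v => ?_ <;>
    cases x <;> simp_all [IsLoopAtOne, edgeCycle, liftCycle]

theorem eq_of_edgeCycle_succ_eq_inl_inl {e : Bool × (Fin (n + 1) → Bool)} {w : Fin n → Bool}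
    (h : edgeCycle (n + 1) e = Sum.inl (Sum.inl w)) : e = (true, Fin.cons true w) := by
  obtain ⟨_ | _, v⟩ := e <;> induction v using Fin.consCases with | cons x v => ?_ <;>
    cases x <;> simp_all [edgeCycle]

/-- The edge set of `B_n` obtained from `A` by contracting each subdivided `a`-edge. -/
noncomputable def contract (A : Finset (Bool × (Fin (n + 1) → Bool))) :
    Finset (Bool × (Fin n → Bool)) :=
  ((univ.filter fun e => e ∉ A ∧ ¬IsLoopAtOne e).image lowerEdge)ᶜ

theorem compl_contract (A : Finset (Bool × (Fin (n + 1) → Bool))) :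
    (↑(contract A) : Set (Bool × (Fin n → Bool)))ᶜ =
      lowerEdge '' {e | e ∉ A ∧ ¬IsLoopAtOne e} := by
  simp [contract]

theorem mem_contract {A : Finset (Bool × (Fin (n + 1) → Bool))} {e' : Bool × (Fin n → Bool)} :
    e' ∈ contract A ↔ ∀ e, lowerEdge e = e' → ¬IsLoopAtOne e → e ∈ A := by
  simp only [contract, mem_compl, mem_image, mem_filter, mem_univ, true_and, not_exists, not_and]
  exact forall_congr' fun e => by tauto

theorem mem_contract_b {A : Finset (Bool × (Fin (n + 1) → Bool))} {w : Fin n → Bool} :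
    (false, w) ∈ contract A ↔ (true, Fin.cons false w) ∈ A := by
  simp only [mem_contract, ← and_imp, lowerEdge_eq_b_iff, forall_eq]

theorem mem_contract_a {A : Finset (Bool × (Fin (n + 1) → Bool))} {t : Fin n → Bool} :
    (true, t) ∈ contract A ↔
      (false, Fin.cons false t) ∈ A ∧ (false, Fin.cons true (basA n t)) ∈ A := by
  simp [mem_contract, lowerEdge_eq_a_iff, IsLoopAtOne, or_imp, forall_and]

/-- No vertex `1a(t)` is isolated in `A`: besides its loop, its only edges are `0t — 1a(t)` and
`1a(t) — 0a(t)`. -/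
def NoIsolatedOne (A : Finset (Bool × (Fin (n + 1) → Bool))) : Prop :=
  ∀ t, (false, Fin.cons false t) ∈ A ∨ (false, Fin.cons true (basA n t)) ∈ A

theorem injOn_lowerEdge_iff (A : Finset (Bool × (Fin (n + 1) → Bool))) :
    Set.InjOn lowerEdge {e | e ∉ A ∧ ¬IsLoopAtOne e} ↔ NoIsolatedOne A := by
  constructor
  · intro h t
    by_contra! hgap
    have := @h (false, Fin.cons false t) ⟨hgap.1, by simp [IsLoopAtOne]⟩
      (false, Fin.cons true (basA n t)) ⟨hgap.2, by simp [IsLoopAtOne]⟩ (by simp)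
    simp [Fin.cons_inj] at this
  · rintro hA e ⟨he, he'⟩ f ⟨hf, hf'⟩ hef
    rcases hlow : lowerEdge e with ⟨_ | _, u⟩
    · rw [lowerEdge_eq_b_iff.1 ⟨hlow, he'⟩, lowerEdge_eq_b_iff.1 ⟨hef ▸ hlow, hf'⟩]
    · have hgap := hA u
      rcases lowerEdge_eq_a_iff.1 hlow with rfl | rfl <;>
        rcases lowerEdge_eq_a_iff.1 (hef ▸ hlow) with rfl | rfl <;> tauto

/-- Every loop at a vertex `1w` is alone on its cycle, so it never spoils injectivity. -/
theorem injOn_edgeCycle_succ_compl_iff_not_loop (A : Finset (Bool × (Fin (n + 1) → Bool))) :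
    Set.InjOn (edgeCycle (n + 1)) (↑A)ᶜ ↔
      Set.InjOn (edgeCycle (n + 1)) {e | e ∉ A ∧ ¬IsLoopAtOne e} := by
  refine ⟨fun h => h.mono fun e he => he.1, fun h e he f hf hef => ?_⟩
  have of_loop {x y} (hx : IsLoopAtOne x) (hxy : edgeCycle (n + 1) x = edgeCycle (n + 1) y) :
      x = y := by
    obtain ⟨_, v⟩ := x
    obtain ⟨rfl, hv : v 0 = true⟩ := hx
    rw [← Fin.cons_self_tail v, hv] at hxy ⊢
    exact (eq_of_edgeCycle_succ_eq_inl_inl hxy.symm).symm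
  by_cases he' : IsLoopAtOne e
  · exact of_loop he' hef
  by_cases hf' : IsLoopAtOne f
  · exact (of_loop hf' hef.symm).symm
  exact h ⟨he, he'⟩ ⟨hf, hf'⟩ hef

theorem injOn_edgeCycle_succ_iff (A : Finset (Bool × (Fin (n + 1) → Bool))) :
    Set.InjOn (edgeCycle (n + 1)) (↑A)ᶜ ↔
      Set.InjOn (edgeCycle n) (↑(contract A))ᶜ ∧ NoIsolatedOne A := by
  have hS : Set.EqOn (edgeCycle (n + 1)) (liftCycle ∘ edgeCycle n ∘ lowerEdge)
      {e | e ∉ A ∧ ¬IsLoopAtOne e} := fun e he => edgeCycle_succ_of_not_isLoopAtOne he.2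
  rw [injOn_edgeCycle_succ_compl_iff_not_loop, hS.injOn_iff, compl_contract,
    ← injOn_lowerEdge_iff]
  exact ⟨fun h => ⟨h.of_comp.image_of_comp, h.of_comp.of_comp⟩,
    fun h => liftCycle_injective.comp_injOn (h.1.comp h.2 (Set.mapsTo_image _ _))⟩

@[simp] theorem inc_a_cons_true (w : Fin n → Bool) :
    (basilica (n + 1)).inc (true, Fin.cons true w) = s(Fin.cons true w, Fin.cons true w) := by
  simp [basilica_inc, basGen]

@[simp] theorem inc_a_cons_false (w : Fin n → Bool) :
    (basilica (n + 1)).inc (true, Fin.cons false w) =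
      s(Fin.cons false w, Fin.cons false (basB n w)) := by
  simp [basilica_inc, basGen]

@[simp] theorem inc_b_cons_true (w : Fin n → Bool) :
    (basilica (n + 1)).inc (false, Fin.cons true w) = s(Fin.cons true w, Fin.cons false w) := by
  simp [basilica_inc, basGen]

@[simp] theorem inc_b_cons_false (t : Fin n → Bool) :
    (basilica (n + 1)).inc (false, Fin.cons false t) =
      s(Fin.cons false t, Fin.cons true (basA n t)) := by
  simp [basilica_inc, basGen]

theorem reachable_map {m k : ℕ} {A : Finset (Bool × (Fin m → Bool))}
    {B : Finset (Bool × (Fin k → Bool))} (f : (Fin m → Bool) → Fin k → Bool)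
    (hf : ∀ e ∈ A, ((basilica k).toSimple B).Reachable (f e.2) (f (basGen m e.1 e.2)))
    {u v : Fin m → Bool} (h : ((basilica m).toSimple A).Reachable u v) :
    ((basilica k).toSimple B).Reachable (f u) (f v) := by
  refine (basilica m).reachable_map f (fun e he x y hxy => ?_) h
  rcases Sym2.eq_iff.1 hxy with ⟨rfl, rfl⟩ | ⟨rfl, rfl⟩
  exacts [hf e he, (hf e he).symm]

theorem reachable_cons_false_of_contract {A : Finset (Bool × (Fin (n + 1) → Bool))}
    {w w' : Fin n → Bool} (h : ((basilica n).toSimple (contract A)).Reachable w w') :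
    ((basilica (n + 1)).toSimple A).Reachable (Fin.cons false w) (Fin.cons false w') := by
  refine reachable_map (fun w => Fin.cons false w) (fun ⟨s, t⟩ he => ?_) h
  cases s
  · exact (basilica _).reachable_of_mem (mem_contract_b.1 he) (inc_a_cons_false t)
  · obtain ⟨hd, hv⟩ := mem_contract_a.1 he
    exact ((basilica _).reachable_of_mem hd (inc_b_cons_false t)).trans
      ((basilica _).reachable_of_mem hv (inc_b_cons_true _))

/-- A retraction of `B_(n+1)` onto `0B_n` that maps every edge of `A` to an edge of `contract A`
or to a single vertex. -/
noncomputable def lowerVertex (A : Finset (Bool × (Fin (n + 1) → Bool)))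
    (v : Fin (n + 1) → Bool) : Fin n → Bool :=
  if v 0 = true ∧ (false, Fin.cons false ((basAPerm n).symm (Fin.tail v))) ∈ A
  then (basAPerm n).symm (Fin.tail v) else Fin.tail v

@[simp] theorem lowerVertex_cons_false (A : Finset (Bool × (Fin (n + 1) → Bool)))
    (w : Fin n → Bool) : lowerVertex A (Fin.cons false w) = w := by
  simp [lowerVertex]

@[simp] theorem lowerVertex_cons_true (A : Finset (Bool × (Fin (n + 1) → Bool)))
    (t : Fin n → Bool) :
    lowerVertex A (Fin.cons true (basA n t)) =
      if (false, Fin.cons false t) ∈ A then t else basA n t := by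
  simp [lowerVertex]

theorem reachable_lowerVertex {A : Finset (Bool × (Fin (n + 1) → Bool))}
    {u v : Fin (n + 1) → Bool} (h : ((basilica (n + 1)).toSimple A).Reachable u v) :
    ((basilica n).toSimple (contract A)).Reachable (lowerVertex A u) (lowerVertex A v) := by
  refine reachable_map (lowerVertex A) (fun ⟨s, v⟩ he => ?_) h
  induction v using Fin.consCases with | cons x w => ?_
  cases s <;> cases x <;> simp only [basGen, basA_cons_true, basA_cons_false, basB_cons_true,
    basB_cons_false, lowerVertex_cons_false]
  · simp [he]
  · obtain ⟨t, rfl⟩ : ∃ t, basA n t = w := ⟨_, (basAPerm n).apply_symm_apply w⟩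
    rw [lowerVertex_cons_true]
    split_ifs with hd
    · exact (basilica n).reachable_of_mem (mem_contract_a.2 ⟨hd, he⟩) rfl
    · rfl
  · exact (basilica n).reachable_of_mem (mem_contract_b.2 he) rfl
  · rfl

theorem eq_of_inc_eq_cons_true {e : Bool × (Fin (n + 1) → Bool)} {t : Fin n → Bool}
    {z : Fin (n + 1) → Bool} (h : (basilica (n + 1)).inc e = s(Fin.cons true (basA n t), z)) :
    z = Fin.cons true (basA n t) ∨ e = (false, Fin.cons false t) ∨
      e = (false, Fin.cons true (basA n t)) := by
  obtain ⟨_ | _, v⟩ := e <;> induction v using Fin.consCases with | cons x v => ?_ <;>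
    cases x <;> simp [Fin.cons_inj, (basA_injective n).eq_iff] at h ⊢ <;> aesop

theorem noIsolatedOne_of_connected {A : Finset (Bool × (Fin (n + 1) → Bool))}
    (h : ((basilica (n + 1)).toSimple A).Connected) : NoIsolatedOne A := by
  intro t
  obtain ⟨z, hz⟩ := h.preconnected.exists_adj_of_nontrivial (Fin.cons true (basA n t))
  obtain ⟨hne, e, he, hinc⟩ := ((basilica _).toSimple_adj A _ z).1 hz
  rcases eq_of_inc_eq_cons_true hinc with rfl | rfl | rfl
  exacts [absurd rfl hne, .inl he, .inr he]

theorem connected_of_contract {A : Finset (Bool × (Fin (n + 1) → Bool))}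
    (hc : ((basilica n).toSimple (contract A)).Connected) (hA : NoIsolatedOne A) :
    ((basilica (n + 1)).toSimple A).Connected := by
  have to_zero (v : Fin (n + 1) → Bool) :
      ∃ w, ((basilica (n + 1)).toSimple A).Reachable v (Fin.cons false w) := by
    induction v using Fin.consCases with | cons x w => ?_
    cases x
    · exact ⟨w, .rfl⟩
    · obtain ⟨t, rfl⟩ : ∃ t, basA n t = w := ⟨_, (basAPerm n).apply_symm_apply w⟩
      rcases hA t with hd | hv
      · exact ⟨t, ((basilica _).reachable_of_mem hd (inc_b_cons_false t)).symm⟩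
      · exact ⟨basA n t, (basilica _).reachable_of_mem hv (inc_b_cons_true _)⟩
  refine Connected.mk fun u v => ?_
  obtain ⟨w, hw⟩ := to_zero u
  obtain ⟨w', hw'⟩ := to_zero v
  exact hw.trans ((reachable_cons_false_of_contract (hc.preconnected w w')).trans hw'.symm)

theorem connected_succ_iff (A : Finset (Bool × (Fin (n + 1) → Bool))) :
    ((basilica (n + 1)).toSimple A).Connected ↔
      ((basilica n).toSimple (contract A)).Connected ∧ NoIsolatedOne A := by
  refine ⟨fun h => ⟨Connected.mk fun w w' => ?_, noIsolatedOne_of_connected h⟩,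
    fun h => connected_of_contract h.1 h.2⟩
  simpa using reachable_lowerVertex (h.preconnected (Fin.cons false w) (Fin.cons false w'))

theorem connected_iff_injOn :
    ∀ (n : ℕ) (A : Finset (Bool × (Fin n → Bool))),
      ((basilica n).toSimple A).Connected ↔ Set.InjOn (edgeCycle n) (↑A)ᶜ
  | 0, _ => iff_of_true (Connected.of_subsingleton) edgeCycle_zero_injective.injOn
  | n + 1, A => by
    rw [connected_succ_iff, connected_iff_injOn n, injOn_edgeCycle_succ_iff]

theorem card_edgeCycle_inl {n : ℕ} (j : CycleA n) :
    Nat.card {e // edgeCycle n e = Sum.inl j} = Nat.card {v // cycleA n v = j} := by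
  simp [Nat.card_subtype_bool_prod, edgeCycle]

theorem card_edgeCycle_inr {n : ℕ} (j : CycleB n) :
    Nat.card {e // edgeCycle n e = Sum.inr j} = Nat.card {v // cycleB n v = j} := by
  simp [Nat.card_subtype_bool_prod, edgeCycle]

theorem card_cycleA_succ_inl {n : ℕ} (w : Fin n → Bool) :
    Nat.card {v // cycleA (n + 1) v = Sum.inl w} = 1 := by
  simp [Nat.card_subtype_fin_succ_bool]

theorem card_cycleA_succ_inr {n : ℕ} (j : CycleB n) :
    Nat.card {v // cycleA (n + 1) v = Sum.inr j} = Nat.card {w // cycleB n w = j} := by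
  simp [Nat.card_subtype_fin_succ_bool]

theorem card_cycleB_succ {n : ℕ} (j : CycleB (n + 1)) :
    Nat.card {v // cycleB (n + 1) v = j} = 2 * Nat.card {w // cycleA n w = j} := by
  simp [Nat.card_subtype_fin_succ_bool, two_mul]

theorem connCount_eq_prod (n : ℕ) :
    (basilica n).connCount = ∏ j, (Nat.card {e // edgeCycle n e = j} + 1) := by
  rw [Multigraph.connCount, ← Nat.card_finset_injOn_compl_eq_prod]
  exact Nat.card_congr (Equiv.subtypeEquivRight fun A =>
    ((basilica n).comps_eq_one_iff A).trans (connected_iff_injOn n A))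

/-- The weight `2 ^ k` collects the doublings met when unwinding the recursion: the `b`-cycles of
`B_(n+1)` are the `a`-cycles of `B_n` at twice the length. -/
noncomputable def cycleProdA (k n : ℕ) : ℕ :=
  ∏ j : CycleA n, (1 + 2 ^ k * Nat.card {v // cycleA n v = j})

noncomputable def cycleProdB (k n : ℕ) : ℕ :=
  ∏ j : CycleB n, (1 + 2 ^ k * Nat.card {v // cycleB n v = j})

theorem connCount_eq_cycleProd (n : ℕ) :
    (basilica n).connCount = cycleProdA 0 n * cycleProdB 0 n := by
  simp [connCount_eq_prod, Fintype.prod_sum_type, card_edgeCycle_inl, card_edgeCycle_inr,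
    cycleProdA, cycleProdB, add_comm]

theorem cycleProdA_zero (k : ℕ) : cycleProdA k 0 = 1 + 2 ^ k := by
  simp [cycleProdA]

theorem cycleProdB_zero (k : ℕ) : cycleProdB k 0 = 1 + 2 ^ k := by
  simp [cycleProdB]

theorem cycleProdA_succ (k n : ℕ) :
    cycleProdA k (n + 1) = (1 + 2 ^ k) ^ 2 ^ n * cycleProdB k n := by
  rw [cycleProdA, cycleProdB]
  refine (Fintype.prod_sum_type _).trans ?_
  simp [card_cycleA_succ_inl, card_cycleA_succ_inr]

theorem cycleProdB_succ (k n : ℕ) : cycleProdB k (n + 1) = cycleProdA (k + 1) n := by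
  simp only [cycleProdA, cycleProdB, card_cycleB_succ, pow_succ, mul_assoc]
  rfl

theorem cycleProd_add_two (k n : ℕ) :
    cycleProdA k (n + 2) * cycleProdB k (n + 2) =
      (1 + 2 ^ k) ^ 2 ^ (n + 1) * (1 + 2 ^ (k + 1)) ^ 2 ^ n *
        (cycleProdA (k + 1) n * cycleProdB (k + 1) n) := by
  rw [cycleProdA_succ, cycleProdB_succ, cycleProdB_succ, cycleProdA_succ]
  ring

theorem cycleProd_one (k : ℕ) :
    cycleProdA k 1 * cycleProdB k 1 = (1 + 2 ^ k) ^ 2 * (1 + 2 ^ (k + 1)) := by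
  rw [cycleProdA_succ, cycleProdB_succ, cycleProdA_zero, cycleProdB_zero]
  ring

theorem cycleProd_even (m k : ℕ) :
    cycleProdA k (2 * m + 2) * cycleProdB k (2 * m + 2) =
      (1 + 2 ^ k) ^ 2 ^ (2 * m + 1) * (1 + 2 ^ (k + m + 1)) ^ 3 *
        ∏ i ∈ Icc 1 m, (1 + 2 ^ (k + i)) ^ (3 * 2 ^ (2 * (m - i) + 1)) := by
  induction m generalizing k with
  | zero =>
    rw [cycleProd_add_two, cycleProdA_zero, cycleProdB_zero]
    simp
    ring
  | succ m ih =>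
    rw [show 2 * (m + 1) + 2 = 2 * m + 2 + 2 by ring, cycleProd_add_two, ih, prod_Icc_one_succ]
    simp only [Nat.add_sub_add_right, Nat.add_sub_cancel, ← add_assoc, add_right_comm k 1]
    ring

theorem cycleProd_odd (m k : ℕ) :
    cycleProdA k (2 * m + 3) * cycleProdB k (2 * m + 3) =
      (1 + 2 ^ k) ^ 2 ^ (2 * m + 2) * (1 + 2 ^ (k + m + 1)) ^ 4 * (1 + 2 ^ (k + m + 2)) *
        ∏ i ∈ Icc 1 m, (1 + 2 ^ (k + i)) ^ (3 * 2 ^ (2 * (m - i) + 2)) := by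
  induction m generalizing k with
  | zero =>
    rw [cycleProd_add_two, cycleProd_one]
    simp
    ring
  | succ m ih =>
    rw [show 2 * (m + 1) + 3 = 2 * m + 3 + 2 by ring, cycleProd_add_two, ih, prod_Icc_one_succ]
    simp only [Nat.add_sub_add_right, Nat.add_sub_cancel, ← add_assoc, add_right_comm k 1]
    ring

end Basilica

open Basilica

/-- The number of connected spanning subgraphs of the level-`n`
Schreier graph `B_n` of the Basilica group: for `n ≥ 4` odd it is
`2^(2^(n-1)) (1 + 2^((n-1)/2))^4 (1 + 2^((n+1)/2))
  ∏_{i=1}^{(n-1)/2-1} (1 + 2^i)^(3·2^(n-2i-1))`;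
for `n ≥ 4` even it is
`2^(2^(n-1)) (1 + 2^(n/2))^3 ∏_{i=1}^{n/2-1} (1 + 2^i)^(3·2^(n-2i-1))`.
Moreover, the counts for `n = 1, 2, 3` are `2²·3`, `2²·3³` and `2⁴·3⁴·5`. -/
theorem connCount_basilica :
    (∀ n : ℕ, 4 ≤ n → Odd n →
      (basilica n).connCount =
        2 ^ (2 ^ (n - 1)) * (1 + 2 ^ ((n - 1) / 2)) ^ 4 * (1 + 2 ^ ((n + 1) / 2)) *
          ∏ i ∈ Finset.Icc 1 ((n - 1) / 2 - 1),
            (1 + 2 ^ i) ^ (3 * 2 ^ (n - 2 * i - 1))) ∧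
    (∀ n : ℕ, 4 ≤ n → Even n →
      (basilica n).connCount =
        2 ^ (2 ^ (n - 1)) * (1 + 2 ^ (n / 2)) ^ 3 *
          ∏ i ∈ Finset.Icc 1 (n / 2 - 1),
            (1 + 2 ^ i) ^ (3 * 2 ^ (n - 2 * i - 1))) ∧
    (basilica 1).connCount = 2 ^ 2 * 3 ∧
    (basilica 2).connCount = 2 ^ 2 * 3 ^ 3 ∧
    (basilica 3).connCount = 2 ^ 4 * 3 ^ 4 * 5 := by
  refine ⟨fun n hn hodd => ?_, fun n hn heven => ?_, ?_, ?_, ?_⟩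
  · obtain ⟨m, rfl⟩ : ∃ m, n = 2 * m + 3 := by
      obtain ⟨c, rfl⟩ := hodd; exact ⟨c - 1, by omega⟩
    rw [connCount_eq_cycleProd, cycleProd_odd, show (2 * m + 3 - 1) / 2 - 1 = m by omega,
      show (2 * m + 3 - 1) / 2 = m + 1 by omega, show (2 * m + 3 + 1) / 2 = m + 2 by omega]
    refine congrArg₂ _ (by norm_num) (Finset.prod_congr rfl fun i hi => ?_)
    rw [Finset.mem_Icc] at hi
    rw [zero_add, show 2 * m + 3 - 2 * i - 1 = 2 * (m - i) + 2 by omega]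
  · obtain ⟨m, rfl⟩ : ∃ m, n = 2 * m + 2 := by
      obtain ⟨c, rfl⟩ := heven; exact ⟨c - 1, by omega⟩
    rw [connCount_eq_cycleProd, cycleProd_even, show (2 * m + 2) / 2 - 1 = m by omega,
      show (2 * m + 2) / 2 = m + 1 by omega]
    refine congrArg₂ _ (by norm_num) (Finset.prod_congr rfl fun i hi => ?_)
    rw [Finset.mem_Icc] at hi
    rw [zero_add, show 2 * m + 2 - 2 * i - 1 = 2 * (m - i) + 1 by omega]
  · rw [connCount_eq_cycleProd, cycleProd_one]
    norm_num
  · simpa [connCount_eq_cycleProd] using cycleProd_even 0 0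
  · simpa [connCount_eq_cycleProd] using cycleProd_odd 0 0
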